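/- With the notation below, suppose there exist functions a, b, c : ℝ² → ℝ such that the curvature coefficients satisfy a₆ = a·a₇, a₈ = b·a₇, a₉ = (ab + c)·a₇, a₁₀ = a·a₁₁, a₁₂ = b·a₁₁, a₁₃ = (ab + c)·a₁₁ on ℝ². Then at every point p of the domain the vectors [δ_t, δ_θ](p) and [δ_r, δ_θ](p) are linearly dependent in ℝ⁸, and likewise [δ_t, δ_φ](p) and [δ_r, δ_φ](p) are linearly dependent. -/

import Mathlib

noncomputable section

abbrev Pt : Type := Fin 8 → ℝ

def hIdx (a : Fin 4) : Fin 8 := ⟨a.val, by omega⟩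
def vIdx (a : Fin 4) : Fin 8 := ⟨a.val + 4, by omega⟩

structure ConnData where
  k1 : ℝ × ℝ → ℝ
  k2 : ℝ × ℝ → ℝ
  k3 : ℝ × ℝ → ℝ
  k4 : ℝ × ℝ → ℝ
  k5 : ℝ × ℝ → ℝ
  k6 : ℝ × ℝ → ℝ
  k7 : ℝ × ℝ → ℝ
  k8 : ℝ × ℝ → ℝ
  k9 : ℝ × ℝ → ℝ
  k10 : ℝ × ℝ → ℝ

def ConnData.Smooth (D : ConnData) : Prop :=
  ContDiff ℝ (⊤ : ℕ∞) D.k1 ∧ ContDiff ℝ (⊤ : ℕ∞) D.k2 ∧ ContDiff ℝ (⊤ : ℕ∞) D.k3 ∧ ContDiff ℝ (⊤ : ℕ∞) D.k4 ∧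
  ContDiff ℝ (⊤ : ℕ∞) D.k5 ∧ ContDiff ℝ (⊤ : ℕ∞) D.k6 ∧ ContDiff ℝ (⊤ : ℕ∞) D.k7 ∧ ContDiff ℝ (⊤ : ℕ∞) D.k8 ∧
  ContDiff ℝ (⊤ : ℕ∞) D.k9 ∧ ContDiff ℝ (⊤ : ℕ∞) D.k10

/-- Christoffel symbols: `Γmat D p c a b` is `Γ^c_{ab}` at the point `p`. -/
def Γmat (D : ConnData) (p : Pt) : Fin 4 → Matrix (Fin 4) (Fin 4) ℝ :=
  let x : ℝ × ℝ := (p 0, p 1)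
  let s : ℝ := Real.sin (p 2)
  let co : ℝ := Real.cos (p 2)
  ![!![D.k1 x, D.k2 x, 0, 0;
      D.k2 x, D.k3 x, 0, 0;
      0, 0, D.k7 x, 0;
      0, 0, 0, D.k7 x * s ^ 2],
    !![D.k4 x, D.k6 x, 0, 0;
      D.k6 x, D.k5 x, 0, 0;
      0, 0, D.k10 x, 0;
      0, 0, 0, D.k10 x * s ^ 2],
    !![0, 0, D.k8 x, 0;
      0, 0, D.k9 x, 0;
      D.k8 x, D.k9 x, 0, 0;
      0, 0, 0, -(s * co)],
    !![0, 0, 0, D.k8 x;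
      0, 0, 0, D.k9 x;
      0, 0, 0, co / s;
      D.k8 x, D.k9 x, co / s, 0]]

/-- `N^c_a = Σ_b Γ^c_{ab} ẋ^b`. -/
def Ncoef (D : ConnData) (c a : Fin 4) (p : Pt) : ℝ :=
  ∑ b : Fin 4, Γmat D p c a b * p (vIdx b)

/-- The horizontal vector field `δ_a` evaluated at `p`. -/
def δvf (D : ConnData) (a : Fin 4) (p : Pt) : Pt :=
  Pi.single (hIdx a) 1 - ∑ c : Fin 4, Pi.single (vIdx c) (Ncoef D c a p)

/-- `δ_a` acting as a derivation on functions. -/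
def δd (D : ConnData) (a : Fin 4) (f : Pt → ℝ) (p : Pt) : ℝ :=
  fderiv ℝ f p (δvf D a p)

/-- Vertical partial derivative `∂̇_a`. -/
def vd (a : Fin 4) (f : Pt → ℝ) (p : Pt) : ℝ :=
  fderiv ℝ f p (Pi.single (vIdx a) 1)

/-- Curvature `R^c_{ab} = δ_b(N^c_a) - δ_a(N^c_b)`. -/
def Rcurv (D : ConnData) (c a b : Fin 4) (p : Pt) : ℝ :=
  δd D b (Ncoef D c a) p - δd D a (Ncoef D c b) p

/-- Connection Ricci tensor `Ric_{bc} = Σ_a ∂̇_b (R^a_{ca})`. -/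
def Ric (D : ConnData) (b c : Fin 4) (p : Pt) : ℝ :=
  ∑ a : Fin 4, vd b (Rcurv D a c a) p

/-- Lie bracket of vector fields on `ℝ⁸`. -/
def lie (X Y : Pt → Pt) (p : Pt) : Pt :=
  fderiv ℝ Y p (X p) - fderiv ℝ X p (Y p)

/-- Partial derivative w.r.t. `t`. -/
def pdt (f : ℝ × ℝ → ℝ) (x : ℝ × ℝ) : ℝ := fderiv ℝ f x (1, 0)
/-- Partial derivative w.r.t. `r`. -/
def pdr (f : ℝ × ℝ → ℝ) (x : ℝ × ℝ) : ℝ := fderiv ℝ f x (0, 1)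

def a1 (D : ConnData) (x : ℝ × ℝ) : ℝ :=
  pdr D.k1 x - pdt D.k2 x + D.k3 x * D.k4 x - D.k2 x * D.k6 x
def a2 (D : ConnData) (x : ℝ × ℝ) : ℝ :=
  pdr D.k2 x - pdt D.k3 x + (D.k2 x) ^ 2 + D.k3 x * D.k6 x - D.k1 x * D.k3 x - D.k2 x * D.k5 x
def a3 (D : ConnData) (x : ℝ × ℝ) : ℝ :=
  pdr D.k4 x - pdt D.k6 x + D.k1 x * D.k6 x + D.k4 x * D.k5 x - D.k2 x * D.k4 x - (D.k6 x) ^ 2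
def a4 (D : ConnData) (x : ℝ × ℝ) : ℝ :=
  pdr D.k6 x - pdt D.k5 x + D.k2 x * D.k6 x - D.k3 x * D.k4 x
def a5 (D : ConnData) (x : ℝ × ℝ) : ℝ := pdr D.k8 x - pdt D.k9 x
def a6 (D : ConnData) (x : ℝ × ℝ) : ℝ :=
  -pdt D.k7 x + D.k7 x * D.k8 x - D.k1 x * D.k7 x - D.k2 x * D.k10 x
def a7 (D : ConnData) (x : ℝ × ℝ) : ℝ :=
  -pdt D.k10 x + D.k8 x * D.k10 x - D.k4 x * D.k7 x - D.k6 x * D.k10 x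
def a8 (D : ConnData) (x : ℝ × ℝ) : ℝ :=
  -pdt D.k8 x + D.k1 x * D.k8 x + D.k4 x * D.k9 x - (D.k8 x) ^ 2
def a9 (D : ConnData) (x : ℝ × ℝ) : ℝ :=
  -pdt D.k9 x + D.k2 x * D.k8 x + D.k6 x * D.k9 x - D.k8 x * D.k9 x
def a10 (D : ConnData) (x : ℝ × ℝ) : ℝ :=
  -pdr D.k7 x + D.k7 x * D.k9 x - D.k2 x * D.k7 x - D.k3 x * D.k10 x
def a11 (D : ConnData) (x : ℝ × ℝ) : ℝ :=
  -pdr D.k10 x + D.k9 x * D.k10 x - D.k6 x * D.k7 x - D.k5 x * D.k10 x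
def a12 (D : ConnData) (x : ℝ × ℝ) : ℝ :=
  -pdr D.k8 x + D.k2 x * D.k8 x + D.k6 x * D.k9 x - D.k8 x * D.k9 x
def a13 (D : ConnData) (x : ℝ × ℝ) : ℝ :=
  -pdr D.k9 x + D.k3 x * D.k8 x + D.k5 x * D.k9 x - (D.k9 x) ^ 2
def a14 (D : ConnData) (x : ℝ × ℝ) : ℝ := 1 + D.k7 x * D.k8 x + D.k9 x * D.k10 x



namespace St7Aux

open ContinuousLinearMap

def gone : ℝ → ℝ := fun _ => 1
def gsq : ℝ → ℝ := fun t => Real.sin t ^ 2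
def gmsc : ℝ → ℝ := fun t => -(Real.sin t * Real.cos t)
def gcot : ℝ → ℝ := fun t => Real.cos t / Real.sin t
def cone : ℝ × ℝ → ℝ := fun _ => 1

lemma hcone : ContDiff ℝ (⊤ : ℕ∞) cone := contDiff_const

lemma cone_fderiv (x : ℝ × ℝ) : fderiv ℝ cone x = 0 := fderiv_const_apply 1

noncomputable def E (i : Fin 8) : Pt := Pi.single i 1

def P01 : Pt →L[ℝ] (ℝ × ℝ) := (proj 0).prod (proj 1)

noncomputable def Lterm (p : Pt) (f : ℝ × ℝ → ℝ) (g : ℝ → ℝ) (g' : ℝ) (i : Fin 8) :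
    Pt →L[ℝ] ℝ :=
  (f (p 0, p 1) * g (p 2)) • (proj i : Pt →L[ℝ] ℝ) +
    p i • (f (p 0, p 1) • (g' • (proj 2 : Pt →L[ℝ] ℝ)) +
      g (p 2) • ((fderiv ℝ f (p 0, p 1)).comp P01))

lemma hasFDerivAt_term (p : Pt) {f : ℝ × ℝ → ℝ} (hf : ContDiff ℝ (⊤ : ℕ∞) f)
    {g : ℝ → ℝ} {g' : ℝ} (hg : HasDerivAt g g' (p 2)) (i : Fin 8) :
    HasFDerivAt (fun q : Pt => f (q 0, q 1) * g (q 2) * q i) (Lterm p f g g' i) p := by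
  have h1 : HasFDerivAt (fun q : Pt => f (q 0, q 1))
      ((fderiv ℝ f (p 0, p 1)).comp P01) p :=
    ((hf.differentiable (by simp) (p 0, p 1)).hasFDerivAt).comp p P01.hasFDerivAt
  have h2 : HasFDerivAt (fun q : Pt => g (q 2)) (g' • (proj 2 : Pt →L[ℝ] ℝ)) p :=
    hg.comp_hasFDerivAt p (proj 2 : Pt →L[ℝ] ℝ).hasFDerivAt
  exact (h1.mul h2).mul ((proj i : Pt →L[ℝ] ℝ).hasFDerivAt)

lemma Lterm_apply (p : Pt) (f : ℝ × ℝ → ℝ) (g : ℝ → ℝ) (g' : ℝ) (i : Fin 8) (v : Pt) :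
    Lterm p f g g' i v = (f (p 0, p 1) * g (p 2)) * v i +
      p i * (f (p 0, p 1) * (g' * v 2) + g (p 2) * fderiv ℝ f (p 0, p 1) (v 0, v 1)) := by
  simp [Lterm, P01, mul_add]

lemma hIdx0 : hIdx 0 = 0 := rfl
lemma hIdx1 : hIdx 1 = 1 := rfl
lemma hIdx2 : hIdx 2 = 2 := rfl
lemma hIdx3 : hIdx 3 = 3 := rfl

lemma vIdx0 : vIdx 0 = 4 := rfl
lemma vIdx1 : vIdx 1 = 5 := rfl
lemma vIdx2 : vIdx 2 = 6 := rfl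
lemma vIdx3 : vIdx 3 = 7 := rfl

lemma not_li (v : Pt) (s t : ℝ) : ¬ LinearIndependent ℝ ![s • v, t • v] := by
  intro h
  rw [linearIndependent_fin2] at h
  obtain ⟨h1, h2⟩ := h
  by_cases ht : t = 0
  · exact h1 (by simp [ht])
  · refine h2 (s / t) ?_
    show (s / t) • t • v = s • v
    rw [smul_smul, div_mul_cancel₀ _ ht]

end St7Aux

set_option maxHeartbeats 2000000 in
open St7Aux in
/-- If there are functions `a, b, c` with `a₆ = a·a₇`, `a₈ = b·a₇`,
`a₉ = (ab+c)·a₇`, `a₁₀ = a·a₁₁`, `a₁₂ = b·a₁₁`, `a₁₃ = (ab+c)·a₁₁`, then at every point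
of the domain the pairs `([δ_t,δ_θ], [δ_r,δ_θ])` and `([δ_t,δ_φ], [δ_r,δ_φ])` are
linearly dependent. -/
theorem statement_7 (D : ConnData) (hD : D.Smooth) (a b c : ℝ × ℝ → ℝ)
    (h6 : ∀ x, a6 D x = a x * a7 D x)
    (h8 : ∀ x, a8 D x = b x * a7 D x)
    (h9 : ∀ x, a9 D x = (a x * b x + c x) * a7 D x)
    (h10 : ∀ x, a10 D x = a x * a11 D x)
    (h12 : ∀ x, a12 D x = b x * a11 D x)
    (h13 : ∀ x, a13 D x = (a x * b x + c x) * a11 D x) :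
    ∀ p : Pt, Real.sin (p 2) ≠ 0 →
      ¬ LinearIndependent ℝ ![lie (δvf D 0) (δvf D 2) p, lie (δvf D 1) (δvf D 2) p] ∧
      ¬ LinearIndependent ℝ ![lie (δvf D 0) (δvf D 3) p, lie (δvf D 1) (δvf D 3) p] := by
  obtain ⟨hk1, hk2, hk3, hk4, hk5, hk6, hk7, hk8, hk9, hk10⟩ := hD
  intro p hs
  obtain ⟨sq', hgsq⟩ : ∃ d, HasDerivAt gsq d (p 2) := ⟨_, (Real.hasDerivAt_sin (p 2)).pow 2⟩
  obtain ⟨msc', hgmsc⟩ : ∃ d, HasDerivAt gmsc d (p 2) := ⟨_, ((Real.hasDerivAt_sin (p 2)).mul (Real.hasDerivAt_cos (p 2))).neg⟩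
  obtain ⟨cot', hgcot⟩ : ∃ d, HasDerivAt gcot d (p 2) := ⟨_, (Real.hasDerivAt_cos (p 2)).div (Real.hasDerivAt_sin (p 2)) hs⟩
  have hgone : HasDerivAt gone 0 (p 2) := hasDerivAt_const _ _
  have e00 : Ncoef D 0 0 = fun q : Pt => D.k1 (q 0, q 1) * gone (q 2) * q 4 + D.k2 (q 0, q 1) * gone (q 2) * q 5 := by
    funext q; simp [Ncoef, Γmat, gone, gsq, gmsc, gcot, cone, Fin.sum_univ_four, St7Aux.vIdx0, St7Aux.vIdx1, St7Aux.vIdx2, St7Aux.vIdx3]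
  have hN00 : HasFDerivAt (Ncoef D 0 0) (Lterm p D.k1 gone (0:ℝ) 4 + Lterm p D.k2 gone (0:ℝ) 5) p := by
    rw [e00]; exact (hasFDerivAt_term p hk1 hgone 4).add (hasFDerivAt_term p hk2 hgone 5)
  have e01 : Ncoef D 0 1 = fun q : Pt => D.k2 (q 0, q 1) * gone (q 2) * q 4 + D.k3 (q 0, q 1) * gone (q 2) * q 5 := by
    funext q; simp [Ncoef, Γmat, gone, gsq, gmsc, gcot, cone, Fin.sum_univ_four, St7Aux.vIdx0, St7Aux.vIdx1, St7Aux.vIdx2, St7Aux.vIdx3]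
  have hN01 : HasFDerivAt (Ncoef D 0 1) (Lterm p D.k2 gone (0:ℝ) 4 + Lterm p D.k3 gone (0:ℝ) 5) p := by
    rw [e01]; exact (hasFDerivAt_term p hk2 hgone 4).add (hasFDerivAt_term p hk3 hgone 5)
  have e02 : Ncoef D 0 2 = fun q : Pt => D.k7 (q 0, q 1) * gone (q 2) * q 6 := by
    funext q; simp [Ncoef, Γmat, gone, gsq, gmsc, gcot, cone, Fin.sum_univ_four, St7Aux.vIdx0, St7Aux.vIdx1, St7Aux.vIdx2, St7Aux.vIdx3]
  have hN02 : HasFDerivAt (Ncoef D 0 2) (Lterm p D.k7 gone (0:ℝ) 6) p := by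
    rw [e02]; exact hasFDerivAt_term p hk7 hgone 6
  have e03 : Ncoef D 0 3 = fun q : Pt => D.k7 (q 0, q 1) * gsq (q 2) * q 7 := by
    funext q; simp [Ncoef, Γmat, gone, gsq, gmsc, gcot, cone, Fin.sum_univ_four, St7Aux.vIdx0, St7Aux.vIdx1, St7Aux.vIdx2, St7Aux.vIdx3]
  have hN03 : HasFDerivAt (Ncoef D 0 3) (Lterm p D.k7 gsq sq' 7) p := by
    rw [e03]; exact hasFDerivAt_term p hk7 hgsq 7
  have e10 : Ncoef D 1 0 = fun q : Pt => D.k4 (q 0, q 1) * gone (q 2) * q 4 + D.k6 (q 0, q 1) * gone (q 2) * q 5 := by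
    funext q; simp [Ncoef, Γmat, gone, gsq, gmsc, gcot, cone, Fin.sum_univ_four, St7Aux.vIdx0, St7Aux.vIdx1, St7Aux.vIdx2, St7Aux.vIdx3]
  have hN10 : HasFDerivAt (Ncoef D 1 0) (Lterm p D.k4 gone (0:ℝ) 4 + Lterm p D.k6 gone (0:ℝ) 5) p := by
    rw [e10]; exact (hasFDerivAt_term p hk4 hgone 4).add (hasFDerivAt_term p hk6 hgone 5)
  have e11 : Ncoef D 1 1 = fun q : Pt => D.k6 (q 0, q 1) * gone (q 2) * q 4 + D.k5 (q 0, q 1) * gone (q 2) * q 5 := by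
    funext q; simp [Ncoef, Γmat, gone, gsq, gmsc, gcot, cone, Fin.sum_univ_four, St7Aux.vIdx0, St7Aux.vIdx1, St7Aux.vIdx2, St7Aux.vIdx3]
  have hN11 : HasFDerivAt (Ncoef D 1 1) (Lterm p D.k6 gone (0:ℝ) 4 + Lterm p D.k5 gone (0:ℝ) 5) p := by
    rw [e11]; exact (hasFDerivAt_term p hk6 hgone 4).add (hasFDerivAt_term p hk5 hgone 5)
  have e12 : Ncoef D 1 2 = fun q : Pt => D.k10 (q 0, q 1) * gone (q 2) * q 6 := by
    funext q; simp [Ncoef, Γmat, gone, gsq, gmsc, gcot, cone, Fin.sum_univ_four, St7Aux.vIdx0, St7Aux.vIdx1, St7Aux.vIdx2, St7Aux.vIdx3]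
  have hN12 : HasFDerivAt (Ncoef D 1 2) (Lterm p D.k10 gone (0:ℝ) 6) p := by
    rw [e12]; exact hasFDerivAt_term p hk10 hgone 6
  have e13 : Ncoef D 1 3 = fun q : Pt => D.k10 (q 0, q 1) * gsq (q 2) * q 7 := by
    funext q; simp [Ncoef, Γmat, gone, gsq, gmsc, gcot, cone, Fin.sum_univ_four, St7Aux.vIdx0, St7Aux.vIdx1, St7Aux.vIdx2, St7Aux.vIdx3]
  have hN13 : HasFDerivAt (Ncoef D 1 3) (Lterm p D.k10 gsq sq' 7) p := by
    rw [e13]; exact hasFDerivAt_term p hk10 hgsq 7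
  have e20 : Ncoef D 2 0 = fun q : Pt => D.k8 (q 0, q 1) * gone (q 2) * q 6 := by
    funext q; simp [Ncoef, Γmat, gone, gsq, gmsc, gcot, cone, Fin.sum_univ_four, St7Aux.vIdx0, St7Aux.vIdx1, St7Aux.vIdx2, St7Aux.vIdx3]
  have hN20 : HasFDerivAt (Ncoef D 2 0) (Lterm p D.k8 gone (0:ℝ) 6) p := by
    rw [e20]; exact hasFDerivAt_term p hk8 hgone 6
  have e21 : Ncoef D 2 1 = fun q : Pt => D.k9 (q 0, q 1) * gone (q 2) * q 6 := by
    funext q; simp [Ncoef, Γmat, gone, gsq, gmsc, gcot, cone, Fin.sum_univ_four, St7Aux.vIdx0, St7Aux.vIdx1, St7Aux.vIdx2, St7Aux.vIdx3]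
  have hN21 : HasFDerivAt (Ncoef D 2 1) (Lterm p D.k9 gone (0:ℝ) 6) p := by
    rw [e21]; exact hasFDerivAt_term p hk9 hgone 6
  have e22 : Ncoef D 2 2 = fun q : Pt => D.k8 (q 0, q 1) * gone (q 2) * q 4 + D.k9 (q 0, q 1) * gone (q 2) * q 5 := by
    funext q; simp [Ncoef, Γmat, gone, gsq, gmsc, gcot, cone, Fin.sum_univ_four, St7Aux.vIdx0, St7Aux.vIdx1, St7Aux.vIdx2, St7Aux.vIdx3]
  have hN22 : HasFDerivAt (Ncoef D 2 2) (Lterm p D.k8 gone (0:ℝ) 4 + Lterm p D.k9 gone (0:ℝ) 5) p := by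
    rw [e22]; exact (hasFDerivAt_term p hk8 hgone 4).add (hasFDerivAt_term p hk9 hgone 5)
  have e23 : Ncoef D 2 3 = fun q : Pt => cone (q 0, q 1) * gmsc (q 2) * q 7 := by
    funext q; simp [Ncoef, Γmat, gone, gsq, gmsc, gcot, cone, Fin.sum_univ_four, St7Aux.vIdx0, St7Aux.vIdx1, St7Aux.vIdx2, St7Aux.vIdx3]
  have hN23 : HasFDerivAt (Ncoef D 2 3) (Lterm p cone gmsc msc' 7) p := by
    rw [e23]; exact hasFDerivAt_term p hcone hgmsc 7
  have e30 : Ncoef D 3 0 = fun q : Pt => D.k8 (q 0, q 1) * gone (q 2) * q 7 := by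
    funext q; simp [Ncoef, Γmat, gone, gsq, gmsc, gcot, cone, Fin.sum_univ_four, St7Aux.vIdx0, St7Aux.vIdx1, St7Aux.vIdx2, St7Aux.vIdx3]
  have hN30 : HasFDerivAt (Ncoef D 3 0) (Lterm p D.k8 gone (0:ℝ) 7) p := by
    rw [e30]; exact hasFDerivAt_term p hk8 hgone 7
  have e31 : Ncoef D 3 1 = fun q : Pt => D.k9 (q 0, q 1) * gone (q 2) * q 7 := by
    funext q; simp [Ncoef, Γmat, gone, gsq, gmsc, gcot, cone, Fin.sum_univ_four, St7Aux.vIdx0, St7Aux.vIdx1, St7Aux.vIdx2, St7Aux.vIdx3]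
  have hN31 : HasFDerivAt (Ncoef D 3 1) (Lterm p D.k9 gone (0:ℝ) 7) p := by
    rw [e31]; exact hasFDerivAt_term p hk9 hgone 7
  have e32 : Ncoef D 3 2 = fun q : Pt => cone (q 0, q 1) * gcot (q 2) * q 7 := by
    funext q; simp [Ncoef, Γmat, gone, gsq, gmsc, gcot, cone, Fin.sum_univ_four, St7Aux.vIdx0, St7Aux.vIdx1, St7Aux.vIdx2, St7Aux.vIdx3]
  have hN32 : HasFDerivAt (Ncoef D 3 2) (Lterm p cone gcot cot' 7) p := by
    rw [e32]; exact hasFDerivAt_term p hcone hgcot 7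
  have e33 : Ncoef D 3 3 = fun q : Pt => D.k8 (q 0, q 1) * gone (q 2) * q 4 + D.k9 (q 0, q 1) * gone (q 2) * q 5 + cone (q 0, q 1) * gcot (q 2) * q 6 := by
    funext q; simp [Ncoef, Γmat, gone, gsq, gmsc, gcot, cone, Fin.sum_univ_four, St7Aux.vIdx0, St7Aux.vIdx1, St7Aux.vIdx2, St7Aux.vIdx3]
  have hN33 : HasFDerivAt (Ncoef D 3 3) (Lterm p D.k8 gone (0:ℝ) 4 + Lterm p D.k9 gone (0:ℝ) 5 + Lterm p cone gcot cot' 6) p := by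
    rw [e33]; exact ((hasFDerivAt_term p hk8 hgone 4).add (hasFDerivAt_term p hk9 hgone 5)).add (hasFDerivAt_term p hcone hgcot 6)
  have ed0 : δvf D 0 = fun q : Pt => (Pi.single (hIdx 0) 1 : Pt) - (Ncoef D 0 0 q • E 4 + Ncoef D 1 0 q • E 5 + Ncoef D 2 0 q • E 6 + Ncoef D 3 0 q • E 7) := by
    funext q; simp [δvf, Fin.sum_univ_four, E, St7Aux.vIdx0, St7Aux.vIdx1, St7Aux.vIdx2, St7Aux.vIdx3, ← Pi.single_smul, smul_eq_mul]
  have Hd0 : HasFDerivAt (δvf D 0) (-((Lterm p D.k1 gone (0:ℝ) 4 + Lterm p D.k2 gone (0:ℝ) 5).smulRight (E 4) + (Lterm p D.k4 gone (0:ℝ) 4 + Lterm p D.k6 gone (0:ℝ) 5).smulRight (E 5) + (Lterm p D.k8 gone (0:ℝ) 6).smulRight (E 6) + (Lterm p D.k8 gone (0:ℝ) 7).smulRight (E 7))) p := by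
    rw [ed0]
    exact HasFDerivAt.const_sub ((((hN00.smul_const (E 4)).add (hN10.smul_const (E 5))).add (hN20.smul_const (E 6))).add (hN30.smul_const (E 7))) _
  have ed1 : δvf D 1 = fun q : Pt => (Pi.single (hIdx 1) 1 : Pt) - (Ncoef D 0 1 q • E 4 + Ncoef D 1 1 q • E 5 + Ncoef D 2 1 q • E 6 + Ncoef D 3 1 q • E 7) := by
    funext q; simp [δvf, Fin.sum_univ_four, E, St7Aux.vIdx0, St7Aux.vIdx1, St7Aux.vIdx2, St7Aux.vIdx3, ← Pi.single_smul, smul_eq_mul]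
  have Hd1 : HasFDerivAt (δvf D 1) (-((Lterm p D.k2 gone (0:ℝ) 4 + Lterm p D.k3 gone (0:ℝ) 5).smulRight (E 4) + (Lterm p D.k6 gone (0:ℝ) 4 + Lterm p D.k5 gone (0:ℝ) 5).smulRight (E 5) + (Lterm p D.k9 gone (0:ℝ) 6).smulRight (E 6) + (Lterm p D.k9 gone (0:ℝ) 7).smulRight (E 7))) p := by
    rw [ed1]
    exact HasFDerivAt.const_sub ((((hN01.smul_const (E 4)).add (hN11.smul_const (E 5))).add (hN21.smul_const (E 6))).add (hN31.smul_const (E 7))) _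
  have ed2 : δvf D 2 = fun q : Pt => (Pi.single (hIdx 2) 1 : Pt) - (Ncoef D 0 2 q • E 4 + Ncoef D 1 2 q • E 5 + Ncoef D 2 2 q • E 6 + Ncoef D 3 2 q • E 7) := by
    funext q; simp [δvf, Fin.sum_univ_four, E, St7Aux.vIdx0, St7Aux.vIdx1, St7Aux.vIdx2, St7Aux.vIdx3, ← Pi.single_smul, smul_eq_mul]
  have Hd2 : HasFDerivAt (δvf D 2) (-((Lterm p D.k7 gone (0:ℝ) 6).smulRight (E 4) + (Lterm p D.k10 gone (0:ℝ) 6).smulRight (E 5) + (Lterm p D.k8 gone (0:ℝ) 4 + Lterm p D.k9 gone (0:ℝ) 5).smulRight (E 6) + (Lterm p cone gcot cot' 7).smulRight (E 7))) p := by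
    rw [ed2]
    exact HasFDerivAt.const_sub ((((hN02.smul_const (E 4)).add (hN12.smul_const (E 5))).add (hN22.smul_const (E 6))).add (hN32.smul_const (E 7))) _
  have ed3 : δvf D 3 = fun q : Pt => (Pi.single (hIdx 3) 1 : Pt) - (Ncoef D 0 3 q • E 4 + Ncoef D 1 3 q • E 5 + Ncoef D 2 3 q • E 6 + Ncoef D 3 3 q • E 7) := by
    funext q; simp [δvf, Fin.sum_univ_four, E, St7Aux.vIdx0, St7Aux.vIdx1, St7Aux.vIdx2, St7Aux.vIdx3, ← Pi.single_smul, smul_eq_mul]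
  have Hd3 : HasFDerivAt (δvf D 3) (-((Lterm p D.k7 gsq sq' 7).smulRight (E 4) + (Lterm p D.k10 gsq sq' 7).smulRight (E 5) + (Lterm p cone gmsc msc' 7).smulRight (E 6) + (Lterm p D.k8 gone (0:ℝ) 4 + Lterm p D.k9 gone (0:ℝ) 5 + Lterm p cone gcot cot' 6).smulRight (E 7))) p := by
    rw [ed3]
    exact HasFDerivAt.const_sub ((((hN03.smul_const (E 4)).add (hN13.smul_const (E 5))).add (hN23.smul_const (E 6))).add (hN33.smul_const (E 7))) _
  have h6x := h6 (p 0, p 1)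
  simp only [a6, a7, pdt, pdr] at h6x
  have h8x := h8 (p 0, p 1)
  simp only [a8, a7, pdt, pdr] at h8x
  have h9x := h9 (p 0, p 1)
  simp only [a9, a7, pdt, pdr] at h9x
  have h10x := h10 (p 0, p 1)
  simp only [a10, a11, pdt, pdr] at h10x
  have h12x := h12 (p 0, p 1)
  simp only [a12, a11, pdt, pdr] at h12x
  have h13x := h13 (p 0, p 1)
  simp only [a13, a11, pdt, pdr] at h13x
  have h00 : ∀ f : ℝ × ℝ → ℝ, (fderiv ℝ f (p 0, p 1)) ((0:ℝ), (0:ℝ)) = 0 := fun f => (fderiv ℝ f (p 0, p 1)).map_zero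
  have hbr02 : lie (δvf D 0) (δvf D 2) p = a7 D (p 0, p 1) • ((a (p 0, p 1) * p 6) • E 4 + p 6 • E 5 + (b (p 0, p 1) * p 4 + (a (p 0, p 1) * b (p 0, p 1) + c (p 0, p 1)) * p 5) • E 6) := by
    simp only [lie, Hd0.fderiv, Hd2.fderiv]
    funext i
    fin_cases i
    · simp [ed0, ed2, hIdx0, hIdx1, hIdx2, hIdx3, Lterm_apply, gone, gsq, gmsc, gcot, cone, cone_fderiv, E, Pi.single_apply, h00, a7, a11, pdt, pdr, e00, e01, e02, e03, e10, e11, e12, e13, e20, e21, e22, e23, e30, e31, e32, e33]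
    · simp [ed0, ed2, hIdx0, hIdx1, hIdx2, hIdx3, Lterm_apply, gone, gsq, gmsc, gcot, cone, cone_fderiv, E, Pi.single_apply, h00, a7, a11, pdt, pdr, e00, e01, e02, e03, e10, e11, e12, e13, e20, e21, e22, e23, e30, e31, e32, e33]
    · simp [ed0, ed2, hIdx0, hIdx1, hIdx2, hIdx3, Lterm_apply, gone, gsq, gmsc, gcot, cone, cone_fderiv, E, Pi.single_apply, h00, a7, a11, pdt, pdr, e00, e01, e02, e03, e10, e11, e12, e13, e20, e21, e22, e23, e30, e31, e32, e33]
    · simp [ed0, ed2, hIdx0, hIdx1, hIdx2, hIdx3, Lterm_apply, gone, gsq, gmsc, gcot, cone, cone_fderiv, E, Pi.single_apply, h00, a7, a11, pdt, pdr, e00, e01, e02, e03, e10, e11, e12, e13, e20, e21, e22, e23, e30, e31, e32, e33]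
    · simp [ed0, ed2, hIdx0, hIdx1, hIdx2, hIdx3, Lterm_apply, gone, gsq, gmsc, gcot, cone, cone_fderiv, E, Pi.single_apply, h00, a7, a11, pdt, pdr, e00, e01, e02, e03, e10, e11, e12, e13, e20, e21, e22, e23, e30, e31, e32, e33]
      linear_combination p 6 * h6x
    · simp [ed0, ed2, hIdx0, hIdx1, hIdx2, hIdx3, Lterm_apply, gone, gsq, gmsc, gcot, cone, cone_fderiv, E, Pi.single_apply, h00, a7, a11, pdt, pdr, e00, e01, e02, e03, e10, e11, e12, e13, e20, e21, e22, e23, e30, e31, e32, e33]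
      ring
    · simp [ed0, ed2, hIdx0, hIdx1, hIdx2, hIdx3, Lterm_apply, gone, gsq, gmsc, gcot, cone, cone_fderiv, E, Pi.single_apply, h00, a7, a11, pdt, pdr, e00, e01, e02, e03, e10, e11, e12, e13, e20, e21, e22, e23, e30, e31, e32, e33]
      linear_combination p 4 * h8x + p 5 * h9x
    · simp [ed0, ed2, hIdx0, hIdx1, hIdx2, hIdx3, Lterm_apply, gone, gsq, gmsc, gcot, cone, cone_fderiv, E, Pi.single_apply, h00, a7, a11, pdt, pdr, e00, e01, e02, e03, e10, e11, e12, e13, e20, e21, e22, e23, e30, e31, e32, e33]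
      ring
  have hbr12 : lie (δvf D 1) (δvf D 2) p = a11 D (p 0, p 1) • ((a (p 0, p 1) * p 6) • E 4 + p 6 • E 5 + (b (p 0, p 1) * p 4 + (a (p 0, p 1) * b (p 0, p 1) + c (p 0, p 1)) * p 5) • E 6) := by
    simp only [lie, Hd1.fderiv, Hd2.fderiv]
    funext i
    fin_cases i
    · simp [ed1, ed2, hIdx0, hIdx1, hIdx2, hIdx3, Lterm_apply, gone, gsq, gmsc, gcot, cone, cone_fderiv, E, Pi.single_apply, h00, a7, a11, pdt, pdr, e00, e01, e02, e03, e10, e11, e12, e13, e20, e21, e22, e23, e30, e31, e32, e33]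
    · simp [ed1, ed2, hIdx0, hIdx1, hIdx2, hIdx3, Lterm_apply, gone, gsq, gmsc, gcot, cone, cone_fderiv, E, Pi.single_apply, h00, a7, a11, pdt, pdr, e00, e01, e02, e03, e10, e11, e12, e13, e20, e21, e22, e23, e30, e31, e32, e33]
    · simp [ed1, ed2, hIdx0, hIdx1, hIdx2, hIdx3, Lterm_apply, gone, gsq, gmsc, gcot, cone, cone_fderiv, E, Pi.single_apply, h00, a7, a11, pdt, pdr, e00, e01, e02, e03, e10, e11, e12, e13, e20, e21, e22, e23, e30, e31, e32, e33]
    · simp [ed1, ed2, hIdx0, hIdx1, hIdx2, hIdx3, Lterm_apply, gone, gsq, gmsc, gcot, cone, cone_fderiv, E, Pi.single_apply, h00, a7, a11, pdt, pdr, e00, e01, e02, e03, e10, e11, e12, e13, e20, e21, e22, e23, e30, e31, e32, e33]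
    · simp [ed1, ed2, hIdx0, hIdx1, hIdx2, hIdx3, Lterm_apply, gone, gsq, gmsc, gcot, cone, cone_fderiv, E, Pi.single_apply, h00, a7, a11, pdt, pdr, e00, e01, e02, e03, e10, e11, e12, e13, e20, e21, e22, e23, e30, e31, e32, e33]
      linear_combination p 6 * h10x
    · simp [ed1, ed2, hIdx0, hIdx1, hIdx2, hIdx3, Lterm_apply, gone, gsq, gmsc, gcot, cone, cone_fderiv, E, Pi.single_apply, h00, a7, a11, pdt, pdr, e00, e01, e02, e03, e10, e11, e12, e13, e20, e21, e22, e23, e30, e31, e32, e33]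
      ring
    · simp [ed1, ed2, hIdx0, hIdx1, hIdx2, hIdx3, Lterm_apply, gone, gsq, gmsc, gcot, cone, cone_fderiv, E, Pi.single_apply, h00, a7, a11, pdt, pdr, e00, e01, e02, e03, e10, e11, e12, e13, e20, e21, e22, e23, e30, e31, e32, e33]
      linear_combination p 4 * h12x + p 5 * h13x
    · simp [ed1, ed2, hIdx0, hIdx1, hIdx2, hIdx3, Lterm_apply, gone, gsq, gmsc, gcot, cone, cone_fderiv, E, Pi.single_apply, h00, a7, a11, pdt, pdr, e00, e01, e02, e03, e10, e11, e12, e13, e20, e21, e22, e23, e30, e31, e32, e33]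
      ring
  have hbr03 : lie (δvf D 0) (δvf D 3) p = a7 D (p 0, p 1) • ((a (p 0, p 1) * (Real.sin (p 2) ^ 2 * p 7)) • E 4 + (Real.sin (p 2) ^ 2 * p 7) • E 5 + (b (p 0, p 1) * p 4 + (a (p 0, p 1) * b (p 0, p 1) + c (p 0, p 1)) * p 5) • E 7) := by
    simp only [lie, Hd0.fderiv, Hd3.fderiv]
    funext i
    fin_cases i
    · simp [ed0, ed3, hIdx0, hIdx1, hIdx2, hIdx3, Lterm_apply, gone, gsq, gmsc, gcot, cone, cone_fderiv, E, Pi.single_apply, h00, a7, a11, pdt, pdr, e00, e01, e02, e03, e10, e11, e12, e13, e20, e21, e22, e23, e30, e31, e32, e33]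
    · simp [ed0, ed3, hIdx0, hIdx1, hIdx2, hIdx3, Lterm_apply, gone, gsq, gmsc, gcot, cone, cone_fderiv, E, Pi.single_apply, h00, a7, a11, pdt, pdr, e00, e01, e02, e03, e10, e11, e12, e13, e20, e21, e22, e23, e30, e31, e32, e33]
    · simp [ed0, ed3, hIdx0, hIdx1, hIdx2, hIdx3, Lterm_apply, gone, gsq, gmsc, gcot, cone, cone_fderiv, E, Pi.single_apply, h00, a7, a11, pdt, pdr, e00, e01, e02, e03, e10, e11, e12, e13, e20, e21, e22, e23, e30, e31, e32, e33]
    · simp [ed0, ed3, hIdx0, hIdx1, hIdx2, hIdx3, Lterm_apply, gone, gsq, gmsc, gcot, cone, cone_fderiv, E, Pi.single_apply, h00, a7, a11, pdt, pdr, e00, e01, e02, e03, e10, e11, e12, e13, e20, e21, e22, e23, e30, e31, e32, e33]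
    · simp [ed0, ed3, hIdx0, hIdx1, hIdx2, hIdx3, Lterm_apply, gone, gsq, gmsc, gcot, cone, cone_fderiv, E, Pi.single_apply, h00, a7, a11, pdt, pdr, e00, e01, e02, e03, e10, e11, e12, e13, e20, e21, e22, e23, e30, e31, e32, e33]
      linear_combination Real.sin (p 2) ^ 2 * p 7 * h6x
    · simp [ed0, ed3, hIdx0, hIdx1, hIdx2, hIdx3, Lterm_apply, gone, gsq, gmsc, gcot, cone, cone_fderiv, E, Pi.single_apply, h00, a7, a11, pdt, pdr, e00, e01, e02, e03, e10, e11, e12, e13, e20, e21, e22, e23, e30, e31, e32, e33]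
      ring
    · simp [ed0, ed3, hIdx0, hIdx1, hIdx2, hIdx3, Lterm_apply, gone, gsq, gmsc, gcot, cone, cone_fderiv, E, Pi.single_apply, h00, a7, a11, pdt, pdr, e00, e01, e02, e03, e10, e11, e12, e13, e20, e21, e22, e23, e30, e31, e32, e33]
      ring
    · simp [ed0, ed3, hIdx0, hIdx1, hIdx2, hIdx3, Lterm_apply, gone, gsq, gmsc, gcot, cone, cone_fderiv, E, Pi.single_apply, h00, a7, a11, pdt, pdr, e00, e01, e02, e03, e10, e11, e12, e13, e20, e21, e22, e23, e30, e31, e32, e33]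
      linear_combination p 4 * h8x + p 5 * h9x
  have hbr13 : lie (δvf D 1) (δvf D 3) p = a11 D (p 0, p 1) • ((a (p 0, p 1) * (Real.sin (p 2) ^ 2 * p 7)) • E 4 + (Real.sin (p 2) ^ 2 * p 7) • E 5 + (b (p 0, p 1) * p 4 + (a (p 0, p 1) * b (p 0, p 1) + c (p 0, p 1)) * p 5) • E 7) := by
    simp only [lie, Hd1.fderiv, Hd3.fderiv]
    funext i
    fin_cases i
    · simp [ed1, ed3, hIdx0, hIdx1, hIdx2, hIdx3, Lterm_apply, gone, gsq, gmsc, gcot, cone, cone_fderiv, E, Pi.single_apply, h00, a7, a11, pdt, pdr, e00, e01, e02, e03, e10, e11, e12, e13, e20, e21, e22, e23, e30, e31, e32, e33]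
    · simp [ed1, ed3, hIdx0, hIdx1, hIdx2, hIdx3, Lterm_apply, gone, gsq, gmsc, gcot, cone, cone_fderiv, E, Pi.single_apply, h00, a7, a11, pdt, pdr, e00, e01, e02, e03, e10, e11, e12, e13, e20, e21, e22, e23, e30, e31, e32, e33]
    · simp [ed1, ed3, hIdx0, hIdx1, hIdx2, hIdx3, Lterm_apply, gone, gsq, gmsc, gcot, cone, cone_fderiv, E, Pi.single_apply, h00, a7, a11, pdt, pdr, e00, e01, e02, e03, e10, e11, e12, e13, e20, e21, e22, e23, e30, e31, e32, e33]
    · simp [ed1, ed3, hIdx0, hIdx1, hIdx2, hIdx3, Lterm_apply, gone, gsq, gmsc, gcot, cone, cone_fderiv, E, Pi.single_apply, h00, a7, a11, pdt, pdr, e00, e01, e02, e03, e10, e11, e12, e13, e20, e21, e22, e23, e30, e31, e32, e33]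
    · simp [ed1, ed3, hIdx0, hIdx1, hIdx2, hIdx3, Lterm_apply, gone, gsq, gmsc, gcot, cone, cone_fderiv, E, Pi.single_apply, h00, a7, a11, pdt, pdr, e00, e01, e02, e03, e10, e11, e12, e13, e20, e21, e22, e23, e30, e31, e32, e33]
      linear_combination Real.sin (p 2) ^ 2 * p 7 * h10x
    · simp [ed1, ed3, hIdx0, hIdx1, hIdx2, hIdx3, Lterm_apply, gone, gsq, gmsc, gcot, cone, cone_fderiv, E, Pi.single_apply, h00, a7, a11, pdt, pdr, e00, e01, e02, e03, e10, e11, e12, e13, e20, e21, e22, e23, e30, e31, e32, e33]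
      ring
    · simp [ed1, ed3, hIdx0, hIdx1, hIdx2, hIdx3, Lterm_apply, gone, gsq, gmsc, gcot, cone, cone_fderiv, E, Pi.single_apply, h00, a7, a11, pdt, pdr, e00, e01, e02, e03, e10, e11, e12, e13, e20, e21, e22, e23, e30, e31, e32, e33]
      ring
    · simp [ed1, ed3, hIdx0, hIdx1, hIdx2, hIdx3, Lterm_apply, gone, gsq, gmsc, gcot, cone, cone_fderiv, E, Pi.single_apply, h00, a7, a11, pdt, pdr, e00, e01, e02, e03, e10, e11, e12, e13, e20, e21, e22, e23, e30, e31, e32, e33]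
      linear_combination p 4 * h12x + p 5 * h13x
  constructor
  · rw [hbr02, hbr12]; exact not_li _ _ _
  · rw [hbr03, hbr13]; exact not_li _ _ _

end
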